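/- arXiv:2507.16188 — 4 statements merged into one kernel-verified Lean document; each statement's English description precedes it below -/
import Mathlib

section
/- Let v_1, …, v_{n+r} be unit vectors in ℂ^n. Then the sum over all ordered pairs i ≠ j of |⟨v_i, v_j⟩|² is at least r. -/
open Finset

private lemma comm3 {M : Type*} [AddCommMonoid M] {α β γ : Type*}
    [Fintype α] [Fintype β] [Fintype γ] (F : α → β → γ → M) :
    ∑ x, ∑ y, ∑ z, F x y z = ∑ y, ∑ z, ∑ x, F x y z := by
  rw [Finset.sum_comm]
  exact Finset.sum_congr rfl fun y _ => Finset.sum_comm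

private lemma key_identity {n m : ℕ} (v : Fin m → EuclideanSpace ℂ (Fin n)) :
    ∑ i, ∑ j, ‖(inner ℂ (v i) (v j) : ℂ)‖ ^ 2
    = ∑ k, ∑ l, ‖∑ i, (starRingEnd ℂ) (v i k) * v i l‖ ^ 2 := by
  have h1 : ∀ i j : Fin m, ‖(inner ℂ (v i) (v j) : ℂ)‖ ^ 2
      = ((inner ℂ (v i) (v j) : ℂ) * (inner ℂ (v j) (v i) : ℂ)).re := by
    intro i j
    have h : (inner ℂ (v j) (v i) : ℂ) = (starRingEnd ℂ) (inner ℂ (v i) (v j) : ℂ) :=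
      (inner_conj_symm _ _).symm
    rw [h, Complex.mul_conj]
    simp [Complex.normSq_eq_norm_sq, ← Complex.ofReal_pow]
  have h2 : ∀ k l : Fin n, ‖∑ i, (starRingEnd ℂ) (v i k) * v i l‖ ^ 2
      = ((∑ i, (starRingEnd ℂ) (v i k) * v i l) *
        (starRingEnd ℂ) (∑ i, (starRingEnd ℂ) (v i k) * v i l)).re := by
    intro k l
    rw [Complex.mul_conj]
    simp [Complex.normSq_eq_norm_sq, ← Complex.ofReal_pow]
  simp_rw [h1, h2, ← Complex.re_sum]
  congr 1
  have expand : ∀ i j : Fin m,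
      (inner ℂ (v i) (v j) : ℂ) * (inner ℂ (v j) (v i) : ℂ)
      = ∑ k, ∑ l, ((starRingEnd ℂ) (v i k) * v i l) * (v j k * (starRingEnd ℂ) (v j l)) := by
    intro i j
    simp_rw [PiLp.inner_apply, RCLike.inner_apply, Finset.sum_mul_sum]
    refine Finset.sum_congr rfl fun k _ => Finset.sum_congr rfl fun l _ => ?_
    ring
  simp_rw [expand]
  rw [show (∑ i : Fin m, ∑ j : Fin m, ∑ k : Fin n, ∑ l : Fin n,
      ((starRingEnd ℂ) (v i k) * v i l) * (v j k * (starRingEnd ℂ) (v j l)))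
    = ∑ k : Fin n, ∑ l : Fin n, ∑ i : Fin m, ∑ j : Fin m,
      ((starRingEnd ℂ) (v i k) * v i l) * (v j k * (starRingEnd ℂ) (v j l)) from by
      rw [Finset.sum_congr rfl fun i _ => comm3
        (fun j k l => ((starRingEnd ℂ) (v i k) * v i l) * (v j k * (starRingEnd ℂ) (v j l)))]
      exact comm3 _]
  refine Finset.sum_congr rfl fun k _ => Finset.sum_congr rfl fun l _ => ?_
  rw [← Finset.sum_mul_sum]
  congr 1
  rw [map_sum]
  refine Finset.sum_congr rfl fun i _ => ?_
  rw [map_mul, starRingEnd_self_apply, mul_comm]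

private lemma frobenius_lower {n m : ℕ} (hn : 0 < n)
    (v : Fin m → EuclideanSpace ℂ (Fin n)) (hv : ∀ i, ‖v i‖ = 1) :
    (m : ℝ) ^ 2 / n ≤ ∑ k, ∑ l, ‖∑ i, (starRingEnd ℂ) (v i k) * v i l‖ ^ 2 := by
  set b : Fin n → ℝ := fun k => ∑ i, ‖v i k‖ ^ 2 with hb
  have hBkk : ∀ k, (∑ i, (starRingEnd ℂ) (v i k) * v i k) = ((b k : ℝ) : ℂ) := by
    intro k
    have h : ∀ i, (starRingEnd ℂ) (v i k) * v i k = ((‖v i k‖ ^ 2 : ℝ) : ℂ) := by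
      intro i
      rw [mul_comm, Complex.mul_conj]
      norm_cast
      simp [Complex.normSq_eq_norm_sq]
    simp only [h, hb]
    push_cast
    rfl
  have hstep1 : ∑ k, (b k) ^ 2 ≤ ∑ k, ∑ l, ‖∑ i, (starRingEnd ℂ) (v i k) * v i l‖ ^ 2 := by
    refine Finset.sum_le_sum fun k _ => ?_
    have h1 : (b k) ^ 2 = ‖∑ i, (starRingEnd ℂ) (v i k) * v i k‖ ^ 2 := by
      rw [hBkk k, Complex.norm_real, Real.norm_eq_abs, sq_abs]
    rw [h1]
    exact Finset.single_le_sum (f := fun l => ‖∑ i, (starRingEnd ℂ) (v i k) * v i l‖ ^ 2)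
      (fun l _ => sq_nonneg _) (mem_univ k)
  have hsum_b : ∑ k, b k = (m : ℝ) := by
    have h : ∀ i : Fin m, ∑ k, ‖v i k‖ ^ 2 = 1 := by
      intro i
      have h := hv i
      rw [EuclideanSpace.norm_eq] at h
      have h2 : √(∑ k, ‖v i k‖ ^ 2) ^ 2 = 1 := by rw [h]; norm_num
      rwa [Real.sq_sqrt (Finset.sum_nonneg fun _ _ => sq_nonneg _)] at h2
    simp only [hb]
    calc ∑ k : Fin n, ∑ i : Fin m, ‖v i k‖ ^ 2
        = ∑ i : Fin m, ∑ k : Fin n, ‖v i k‖ ^ 2 := Finset.sum_comm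
      _ = ∑ _i : Fin m, (1 : ℝ) := Finset.sum_congr rfl fun i _ => h i
      _ = m := by simp
  have hCS : (m : ℝ) ^ 2 ≤ n * ∑ k, (b k) ^ 2 := by
    have h := sq_sum_le_card_mul_sum_sq (s := (univ : Finset (Fin n))) (f := b)
    rw [hsum_b] at h
    simpa using h
  have hn' : (0 : ℝ) < n := by exact_mod_cast hn
  rw [div_le_iff₀ hn']
  nlinarith [hstep1]

/-- Let `v 1, …, v (n+r)` be unit vectors in `ℂ^n`. Then the sum over all ordered
pairs `i ≠ j` of `|⟨v i, v j⟩|²` is at least `r`. -/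
theorem stmt_0 (n r : ℕ) (v : Fin (n + r) → EuclideanSpace ℂ (Fin n))
    (hv : ∀ i, ‖v i‖ = 1) :
    (r : ℝ) ≤ ∑ i : Fin (n + r), ∑ j : Fin (n + r),
      if i ≠ j then ‖(inner ℂ (v i) (v j) : ℂ)‖ ^ 2 else 0 := by
  rcases Nat.eq_zero_or_pos n with hn | hn
  · subst hn
    rcases Nat.eq_zero_or_pos r with hr | hr
    · subst hr; simp
    · exfalso
      have h := hv ⟨0, by omega⟩
      rw [EuclideanSpace.norm_eq] at h
      simp at h
  have hdiag : ∀ i : Fin (n + r), ‖(inner ℂ (v i) (v i) : ℂ)‖ ^ 2 = 1 := by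
    intro i
    rw [inner_self_eq_norm_sq_to_K, hv i]
    norm_num
  have hrow : ∀ i : Fin (n + r),
      (∑ j, if i ≠ j then ‖(inner ℂ (v i) (v j) : ℂ)‖ ^ 2 else 0)
      = (∑ j, ‖(inner ℂ (v i) (v j) : ℂ)‖ ^ 2) - 1 := by
    intro i
    have h1 : ∀ j, (if i ≠ j then ‖(inner ℂ (v i) (v j) : ℂ)‖ ^ 2 else 0)
        = ‖(inner ℂ (v i) (v j) : ℂ)‖ ^ 2
          - (if i = j then ‖(inner ℂ (v i) (v j) : ℂ)‖ ^ 2 else 0) := by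
      intro j; by_cases h : i = j <;> simp [h]
    simp_rw [h1, Finset.sum_sub_distrib, Finset.sum_ite_eq, mem_univ, if_true, hdiag]
  have hgoal : (∑ i : Fin (n + r), ∑ j, if i ≠ j then ‖(inner ℂ (v i) (v j) : ℂ)‖ ^ 2 else 0)
      = (∑ i : Fin (n + r), ∑ j, ‖(inner ℂ (v i) (v j) : ℂ)‖ ^ 2) - (n + r) := by
    simp_rw [hrow, Finset.sum_sub_distrib]
    simp
  rw [hgoal, key_identity, le_sub_iff_add_le]
  have hlow := frobenius_lower hn v hv
  have hn' : (0 : ℝ) < n := by exact_mod_cast hn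
  have harith : ((n : ℝ) + r) + r ≤ ((n + r : ℕ) : ℝ) ^ 2 / n := by
    rw [le_div_iff₀ hn']
    push_cast
    nlinarith [sq_nonneg (r : ℝ)]
  push_cast at harith hlow ⊢
  linarith
end

section
/- Let G be a graph on vertex set V such that for some constants c₀ > 0 and α ∈ (0,1), every ball satisfies |B_v(r)| ≤ c₀·exp(r^{1−α}) for all v ∈ V and r ≥ 1. Then for every integer R ≥ c₀ and every vertex v, there exists an integer r with R ≤ r ≤ 2R such that |B_v(r+1) \ B_v(r)| / |B_v(r)| ≤ 8 / r^α. -/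
open Finset


open SimpleGraph

lemma aux_walk_front {V : Type*} {G : SimpleGraph V} {v w : V} (p : G.Walk v w) (i : ℕ) :
    ∃ q : G.Walk v (p.getVert i), q.length ≤ i := by
  induction p generalizing i with
  | nil => exact ⟨Walk.nil.copy rfl (Walk.getVert_of_length_le _ (by simp)).symm, by simp⟩
  | cons h q ih =>
    cases i with
    | zero => exact ⟨Walk.nil.copy rfl (Walk.getVert_zero _).symm, by simp⟩
    | succ n =>
      obtain ⟨q', hq'⟩ := ih n
      exact ⟨(q'.cons h).copy rfl (Walk.getVert_cons_succ _ h).symm, by simpa using hq'⟩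

lemma aux_walk_back {V : Type*} {G : SimpleGraph V} {v w : V} (p : G.Walk v w) :
    ∀ i ≤ p.length, ∃ q : G.Walk (p.getVert i) w, q.length + i = p.length := by
  induction p with
  | nil =>
    intro i hi
    simp only [SimpleGraph.Walk.length_nil, Nat.le_zero] at hi
    subst hi
    exact ⟨Walk.nil.copy (Walk.getVert_zero _).symm rfl, by simp⟩
  | cons h q ih =>
    intro i hi
    cases i with
    | zero => exact ⟨(q.cons h).copy (Walk.getVert_zero _).symm rfl, by simp⟩
    | succ n =>
      obtain ⟨q', hq'⟩ := ih n (by simpa using hi)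
      refine ⟨q'.copy (Walk.getVert_cons_succ _ h).symm rfl, ?_⟩
      simp [hq', Nat.succ_eq_add_one]; omega

lemma aux_ball_card {V : Type*} [Fintype V] (G : SimpleGraph V) (v u : V) (R : ℕ)
    (hu : G.dist v u = R + 1) : R + 1 ≤ {w : V | G.dist v w ≤ R}.ncard := by
  have hreach : G.Reachable v u := Reachable.of_dist_ne_zero (by omega)
  obtain ⟨p, hp⟩ := hreach.exists_walk_length_eq_dist
  rw [hu] at hp
  have hdist : ∀ k ≤ R, G.dist v (p.getVert k) = k := by
    intro k hk
    obtain ⟨q1, hq1⟩ := aux_walk_front p k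
    have hle : G.dist v (p.getVert k) ≤ k := le_trans (SimpleGraph.dist_le q1) hq1
    obtain ⟨q2, hq2⟩ := aux_walk_back p k (by omega)
    obtain ⟨w1, hw1⟩ := SimpleGraph.Reachable.exists_walk_length_eq_dist (⟨q1⟩ : G.Reachable v (p.getVert k))
    have htri : G.dist v u ≤ (w1.append q2).length := SimpleGraph.dist_le _
    rw [SimpleGraph.Walk.length_append] at htri
    omega
  have hinj : Set.InjOn p.getVert ↑(Finset.range (R + 1)) := by
    intro a ha b hb hab
    simp only [Finset.coe_range, Set.mem_Iio] at ha hb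
    have h1 := hdist a (by omega)
    have h2 := hdist b (by omega)
    rw [hab, h2] at h1
    omega
  have hcard : (p.getVert '' ↑(Finset.range (R + 1))).ncard = R + 1 := by
    rw [Set.ncard_image_of_injOn hinj, Set.ncard_coe_finset, Finset.card_range]
  rw [← hcard]
  refine Set.ncard_le_ncard ?_ (Set.toFinite _)
  rintro x ⟨k, hk, rfl⟩
  simp only [Finset.coe_range, Set.mem_Iio] at hk
  have := hdist k (by omega)
  simp only [Set.mem_setOf_eq, this]
  omega

/-- Subexponential growth of balls yields, in every scale, a ball whose boundary-to-volume
ratio is at most `8 / r^α`. -/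
theorem stmt_2 {V : Type*} [Fintype V] (G : SimpleGraph V)
    (ball : V → ℕ → Set V)
    (hball : ∀ v ρ, ball v ρ = {u : V | G.dist v u ≤ ρ})
    (c₀ α : ℝ) (hc₀ : 0 < c₀) (hα : α ∈ Set.Ioo (0 : ℝ) 1)
    (hgrowth : ∀ v : V, ∀ ρ : ℕ, 1 ≤ ρ →
      ((ball v ρ).ncard : ℝ) ≤ c₀ * Real.exp ((ρ : ℝ) ^ (1 - α)))
    (R : ℕ) (hR : c₀ ≤ (R : ℝ)) (v : V) :
    ∃ r : ℕ, R ≤ r ∧ r ≤ 2 * R ∧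
      (((ball v (r + 1) \ ball v r).ncard : ℝ) / ((ball v r).ncard : ℝ)) ≤
        8 / (r : ℝ) ^ α := by
  by_contra hcon
  push_neg at hcon
  obtain ⟨hα0, hα1⟩ := hα
  have hR1 : 1 ≤ R := by
    by_contra hR0
    have hR0' : R = 0 := by omega
    rw [hR0'] at hR
    simp at hR
    linarith
  have hRpos : (0:ℝ) < (R:ℝ) := by exact_mod_cast hR1
  -- basic facts about balls
  have hvmem : ∀ ρ : ℕ, v ∈ ball v ρ := by
    intro ρ
    rw [hball]
    simp [SimpleGraph.dist_self]
  have hnpos : ∀ ρ : ℕ, (0:ℝ) < ((ball v ρ).ncard : ℝ) := by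
    intro ρ
    exact_mod_cast Set.ncard_pos (Set.toFinite _) |>.mpr ⟨v, hvmem ρ⟩
  have hsub : ∀ ρ : ℕ, ball v ρ ⊆ ball v (ρ+1) := by
    intro ρ u hu
    rw [hball] at hu ⊢
    simp only [Set.mem_setOf_eq] at hu ⊢
    omega
  have hdiffcast : ∀ ρ : ℕ, ((ball v (ρ+1) \ ball v ρ).ncard : ℝ)
      = ((ball v (ρ+1)).ncard : ℝ) - ((ball v ρ).ncard : ℝ) := by
    intro ρ
    have hle := Set.ncard_le_ncard (hsub ρ) (Set.toFinite _)
    rw [Set.ncard_diff (hsub ρ), Nat.cast_sub hle]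
  -- the quantity z
  set B : ℝ := 2*(R:ℝ) with hBdef
  have hB2 : (2:ℝ) ≤ B := by
    have h1 : (1:ℝ) ≤ (R:ℝ) := by exact_mod_cast hR1
    rw [hBdef]; linarith
  have hBpos : (0:ℝ) < B := by linarith
  set z : ℝ := B ^ (-α) with hzdef
  have hz0 : 0 < z := Real.rpow_pos_of_pos hBpos _
  have hz1 : z ≤ 1 := Real.rpow_le_one_of_one_le_of_nonpos (by linarith) (by linarith)
  have hzr : ∀ r : ℕ, R ≤ r → r ≤ 2*R → 8*z ≤ 8 / (r:ℝ)^α := by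
    intro r h1 h2
    have hr1 : 1 ≤ r := le_trans hR1 h1
    have hr0 : (0:ℝ) < (r:ℝ) := by exact_mod_cast hr1
    have hrB : (r:ℝ) ≤ B := by
      rw [hBdef]
      exact_mod_cast h2
    have h3 : (r:ℝ)^α ≤ B^α := Real.rpow_le_rpow hr0.le hrB hα0.le
    have h4 : (0:ℝ) < (r:ℝ)^α := Real.rpow_pos_of_pos hr0 _
    have h5 : z = (B^α)⁻¹ := by rw [hzdef, Real.rpow_neg hBpos.le]
    have h6 : (B^α)⁻¹ ≤ ((r:ℝ)^α)⁻¹ := inv_anti₀ h4 h3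
    rw [div_eq_mul_inv]
    nlinarith
  -- one growth step
  have step : ∀ r : ℕ, R ≤ r → r ≤ 2*R →
      (1+8*z) * ((ball v r).ncard : ℝ) ≤ ((ball v (r+1)).ncard : ℝ) := by
    intro r h1 h2
    have hc := hcon r h1 h2
    rw [hdiffcast r] at hc
    have hlt := (lt_div_iff₀ (hnpos r)).mp hc
    have h8 := hzr r h1 h2
    nlinarith [hnpos r]
  -- base: ball of radius R has at least R+1 points
  have base : (R:ℝ) + 1 ≤ ((ball v R).ncard : ℝ) := by
    have hc := hcon R le_rfl (by omega)
    have h8 : 0 < 8 / (R:ℝ)^α := by positivity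
    have hdivpos : 0 < ((ball v (R+1) \ ball v R).ncard : ℝ) / ((ball v R).ncard : ℝ) :=
      lt_trans h8 hc
    have hdpos : 0 < ((ball v (R+1) \ ball v R).ncard : ℝ) := by
      rcases div_pos_iff.mp hdivpos with ⟨h, _⟩ | ⟨_, h⟩
      · exact h
      · exact absurd h (not_lt.mpr (hnpos R).le)
    have hne : (ball v (R+1) \ ball v R).Nonempty := by
      refine (Set.ncard_pos (Set.toFinite _)).mp ?_
      exact_mod_cast hdpos
    obtain ⟨u, hu1, hu2⟩ := hne
    rw [hball] at hu1 hu2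
    simp only [Set.mem_setOf_eq] at hu1 hu2
    have hdu : G.dist v u = R + 1 := by omega
    have hcard := aux_ball_card G v u R hdu
    have : (R + 1 : ℕ) ≤ (ball v R).ncard := by rw [hball]; exact hcard
    exact_mod_cast this
  -- iterated growth
  have grow : ∀ k : ℕ, k ≤ R+1 → ((R:ℝ)+1) * (1+8*z)^k ≤ ((ball v (R+k)).ncard : ℝ) := by
    intro k
    induction k with
    | zero => intro _; simpa using base
    | succ m ih =>
      intro hm
      have h1 := ih (by omega)
      have h2 := step (R+m) (by omega) (by omega)
      calc ((R:ℝ)+1) * (1+8*z)^(m+1) = (1+8*z) * (((R:ℝ)+1) * (1+8*z)^m) := by ring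
        _ ≤ (1+8*z) * ((ball v (R+m)).ncard : ℝ) := by
            apply mul_le_mul_of_nonneg_left h1 (by positivity)
        _ ≤ ((ball v (R+m+1)).ncard : ℝ) := h2
  have hlow := grow (R+1) le_rfl
  have hidx : R + (R+1) = 2*R+1 := by omega
  rw [hidx] at hlow
  set C : ℝ := 2*(R:ℝ)+1 with hCdef
  have hCpos : (0:ℝ) < C := by rw [hCdef]; linarith
  have hup : ((ball v (2*R+1)).ncard : ℝ) ≤ c₀ * Real.exp (C ^ (1-α)) := by
    have hg := hgrowth v (2*R+1) (by omega)
    have hcast : ((2*R+1 : ℕ):ℝ) = C := by rw [hCdef]; push_cast; ring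
    rwa [hcast] at hg
  have hexp2 : Real.exp 2 ≤ 9 := by
    have h1 := Real.exp_one_lt_d9
    have h2 : Real.exp 2 = Real.exp 1 * Real.exp 1 := by
      rw [← Real.exp_add]; norm_num
    nlinarith [Real.exp_pos 1]
  have he2 : Real.exp (2*z) ≤ 1 + 8*z := by
    have hcv := convexOn_exp.2 (Set.mem_univ (0:ℝ)) (Set.mem_univ (2:ℝ))
      (by linarith : (0:ℝ) ≤ 1 - z) hz0.le (by ring)
    simp only [smul_eq_mul] at hcv
    rw [show (1-z)*0 + z*2 = 2*z by ring, Real.exp_zero] at hcv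
    nlinarith
  have hCz : C ^ (1-α) ≤ C * z := by
    have h1 : C ^ (1-α) = C * C^(-α) := by
      rw [show (1-α) = 1 + (-α) by ring, Real.rpow_add hCpos, Real.rpow_one]
    have h2 : C^(-α) ≤ z := by
      rw [Real.rpow_neg hCpos.le, hzdef, Real.rpow_neg hBpos.le]
      refine inv_anti₀ (Real.rpow_pos_of_pos hBpos _) ?_
      exact Real.rpow_le_rpow hBpos.le (by rw [hCdef]; linarith) hα0.le
    nlinarith [h2, hCpos]
  have hpow : Real.exp (C ^ (1-α)) ≤ (1+8*z)^(R+1) := by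
    calc Real.exp (C^(1-α)) ≤ Real.exp (((R+1:ℕ):ℝ) * (2*z)) := by
          apply Real.exp_le_exp.mpr
          calc C^(1-α) ≤ C*z := hCz
            _ ≤ ((R+1:ℕ):ℝ) * (2*z) := by push_cast; rw [hCdef]; nlinarith
      _ = Real.exp (2*z) ^ (R+1) := Real.exp_nat_mul _ _
      _ ≤ (1+8*z)^(R+1) := pow_le_pow_left₀ (Real.exp_nonneg _) he2 _
  have hfin1 : ((R:ℝ)+1) * Real.exp (C^(1-α)) ≤ ((ball v (2*R+1)).ncard : ℝ) :=
    le_trans (mul_le_mul_of_nonneg_left hpow (by positivity)) hlow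
  have hfin2 : ((ball v (2*R+1)).ncard : ℝ) ≤ (R:ℝ) * Real.exp (C^(1-α)) :=
    le_trans hup (mul_le_mul_of_nonneg_right hR (Real.exp_nonneg _))
  nlinarith [Real.exp_pos (C^(1-α))]
end

section
/- Let ν_i and π_i (i = 1, …, m) be probability measures on finite sets Ω_i with π_i everywhere positive, and let ν = Π ν_i and π = Π π_i be the product measures on Π Ω_i. Then ‖ν − π‖_TV ≤ (Σ_{i=1}^m ‖ν_i − π_i‖²_{L²(π_i)})^{1/2}, where ‖ν_i − π_i‖²_{L²(π_i)} = Σ_{x∈Ω_i} (ν_i(x)−π_i(x))²/π_i(x). -/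
open Finset

private lemma one_sub_prod_le_sum_one_sub {m : ℕ} (b : Fin m → ℝ)
    (h0 : ∀ i, 0 ≤ b i) (h1 : ∀ i, b i ≤ 1) :
    1 - ∏ i, b i ≤ ∑ i, (1 - b i) := by
  classical
  induction (univ : Finset (Fin m)) using Finset.cons_induction with
  | empty => simp
  | cons a s ha ih =>
      rw [Finset.prod_cons, Finset.sum_cons]
      have hP0 : 0 ≤ ∏ i ∈ s, b i := Finset.prod_nonneg fun i _ => h0 i
      have hP1 : ∏ i ∈ s, b i ≤ 1 := Finset.prod_le_one (fun i _ => h0 i) (fun i _ => h1 i)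
      nlinarith [ih, mul_nonneg (sub_nonneg.mpr (h1 a)) (sub_nonneg.mpr hP1)]

private lemma sq_sqrt_sub_le {a b : ℝ} (ha : 0 ≤ a) (hb : 0 < b) :
    (Real.sqrt a - Real.sqrt b) ^ 2 ≤ (a - b) ^ 2 / b := by
  rw [le_div_iff₀ hb]
  nlinarith [Real.sq_sqrt ha, Real.sq_sqrt hb.le, Real.sqrt_nonneg a, Real.sqrt_nonneg b,
    sq_nonneg (Real.sqrt a - Real.sqrt b), sq_nonneg (Real.sqrt a + Real.sqrt b),
    mul_nonneg (Real.sqrt_nonneg a) (Real.sqrt_nonneg b),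
    mul_nonneg (mul_nonneg (Real.sqrt_nonneg a) (Real.sqrt_nonneg b))
      (sq_nonneg (Real.sqrt a - Real.sqrt b))]

/-- `L¹`–`L²` reduction for product measures: the total variation distance between two
product probability measures is at most the square root of the sum of the coordinatewise
squared `L²(π_i)` distances. -/
theorem stmt_8 (m : ℕ) (Ω : Fin m → Type*) [∀ i, Fintype (Ω i)]
    (ν π : ∀ i, Ω i → ℝ)
    (hν : ∀ i x, 0 ≤ ν i x) (hπ : ∀ i x, 0 < π i x)
    (hν1 : ∀ i, ∑ x, ν i x = 1) (hπ1 : ∀ i, ∑ x, π i x = 1) :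
    (1 / 2) * ∑ x : (∀ i, Ω i), |(∏ i, ν i (x i)) - ∏ i, π i (x i)| ≤
      Real.sqrt (∑ i, ∑ y, (ν i y - π i y) ^ 2 / π i y) := by
  classical
  set B : Fin m → ℝ := fun i => ∑ y, Real.sqrt (ν i y * π i y) with hB
  set P : ℝ := ∏ i, B i with hPdef
  -- basic facts about B
  have hB0 : ∀ i, 0 ≤ B i := fun i => Finset.sum_nonneg fun y _ => Real.sqrt_nonneg _
  have hB1 : ∀ i, B i ≤ 1 := by
    intro i
    have h : ∀ y : Ω i, Real.sqrt (ν i y * π i y) ≤ (ν i y + π i y) / 2 := by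
      intro y
      rw [show (ν i y + π i y) / 2 = Real.sqrt (((ν i y + π i y) / 2) ^ 2) from
        (Real.sqrt_sq (div_nonneg (add_nonneg (hν i y) (hπ i y).le) (by norm_num))).symm]
      apply Real.sqrt_le_sqrt
      nlinarith [sq_nonneg (ν i y - π i y)]
    calc B i ≤ ∑ y, (ν i y + π i y) / 2 := Finset.sum_le_sum fun y _ => h y
      _ = 1 := by rw [← Finset.sum_div, Finset.sum_add_distrib, hν1, hπ1]; norm_num
  have hP1 : P ≤ 1 := Finset.prod_le_one (fun i _ => hB0 i) (fun i _ => hB1 i)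
  -- a and b functions
  set a : (∀ i, Ω i) → ℝ := fun x => ∏ i, Real.sqrt (ν i (x i)) with hadef
  set b : (∀ i, Ω i) → ℝ := fun x => ∏ i, Real.sqrt (π i (x i)) with hbdef
  have ha0 : ∀ x, 0 ≤ a x := fun x => Finset.prod_nonneg fun i _ => Real.sqrt_nonneg _
  have hb0 : ∀ x, 0 ≤ b x := fun x => Finset.prod_nonneg fun i _ => Real.sqrt_nonneg _
  have hasq : ∀ x, a x ^ 2 = ∏ i, ν i (x i) := by
    intro x
    rw [hadef, ← Finset.prod_pow]
    exact Finset.prod_congr rfl fun i _ => Real.sq_sqrt (hν i (x i))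
  have hbsq : ∀ x, b x ^ 2 = ∏ i, π i (x i) := by
    intro x
    rw [hbdef, ← Finset.prod_pow]
    exact Finset.prod_congr rfl fun i _ => Real.sq_sqrt (hπ i (x i)).le
  have hsuma : ∑ x : (∀ i, Ω i), a x ^ 2 = 1 := by
    simp_rw [hasq]
    rw [← Fintype.prod_sum]
    simp [hν1]
  have hsumb : ∑ x : (∀ i, Ω i), b x ^ 2 = 1 := by
    simp_rw [hbsq]
    rw [← Fintype.prod_sum]
    simp [hπ1]
  have hsumab : ∑ x : (∀ i, Ω i), a x * b x = P := by
    have h : ∀ x : (∀ i, Ω i), a x * b x = ∏ i, Real.sqrt (ν i (x i) * π i (x i)) := by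
      intro x
      rw [hadef, hbdef, ← Finset.prod_mul_distrib]
      exact Finset.prod_congr rfl fun i _ => (Real.sqrt_mul (hν i (x i)) _).symm
    simp_rw [h]
    rw [hPdef]
    simp only [hB]
    exact (Fintype.prod_sum fun i y => Real.sqrt (ν i y * π i y)).symm
  -- Cauchy-Schwarz step
  have key : ∑ x : (∀ i, Ω i), |(∏ i, ν i (x i)) - ∏ i, π i (x i)| ≤
      Real.sqrt (2 - 2 * P) * 2 := by
    have h1 : ∀ x : (∀ i, Ω i), |(∏ i, ν i (x i)) - ∏ i, π i (x i)| =
        |a x - b x| * (a x + b x) := by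
      intro x
      rw [← hasq, ← hbsq, ← abs_of_nonneg (add_nonneg (ha0 x) (hb0 x)), ← abs_mul]
      congr 1
      ring
    simp_rw [h1]
    have e1 : ∑ x : (∀ i, Ω i), |a x - b x| ^ 2 = 2 - 2 * P := by
      have h : ∀ x : (∀ i, Ω i), |a x - b x| ^ 2 =
          a x ^ 2 + b x ^ 2 - 2 * (a x * b x) := fun x => by rw [sq_abs]; ring
      simp_rw [h]
      rw [Finset.sum_sub_distrib, Finset.sum_add_distrib, hsuma, hsumb,
        ← Finset.mul_sum, hsumab]
      ring
    have e2 : ∑ x : (∀ i, Ω i), (a x + b x) ^ 2 = 2 + 2 * P := by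
      have h : ∀ x : (∀ i, Ω i), (a x + b x) ^ 2 =
          a x ^ 2 + b x ^ 2 + 2 * (a x * b x) := fun x => by ring
      simp_rw [h]
      rw [Finset.sum_add_distrib, Finset.sum_add_distrib, hsuma, hsumb,
        ← Finset.mul_sum, hsumab]
      ring
    have h4 : Real.sqrt (∑ x : (∀ i, Ω i), (a x + b x) ^ 2) ≤ 2 := by
      rw [e2]
      have h5 : (2 : ℝ) + 2 * P ≤ 2 ^ 2 := by nlinarith
      calc Real.sqrt (2 + 2 * P) ≤ Real.sqrt (2 ^ 2) := Real.sqrt_le_sqrt h5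
        _ = 2 := Real.sqrt_sq (by norm_num)
    calc ∑ x : (∀ i, Ω i), |a x - b x| * (a x + b x)
        ≤ Real.sqrt (∑ x : (∀ i, Ω i), |a x - b x| ^ 2) *
          Real.sqrt (∑ x : (∀ i, Ω i), (a x + b x) ^ 2) :=
          Real.sum_mul_le_sqrt_mul_sqrt _ _ _
      _ ≤ Real.sqrt (2 - 2 * P) * 2 := by
          rw [e1]
          exact mul_le_mul_of_nonneg_left h4 (Real.sqrt_nonneg _)
  -- comparison of 2 - 2P with the chi-square sum
  have hfinal : 2 - 2 * P ≤ ∑ i, ∑ y, (ν i y - π i y) ^ 2 / π i y := by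
    have h1 : 2 - 2 * P ≤ ∑ i, (2 - 2 * B i) := by
      have h := one_sub_prod_le_sum_one_sub B hB0 hB1
      rw [← hPdef] at h
      have h2 : ∑ i, (2 - 2 * B i) = 2 * ∑ i, (1 - B i) := by
        rw [Finset.mul_sum]; exact Finset.sum_congr rfl fun i _ => by ring
      linarith
    refine h1.trans (Finset.sum_le_sum fun i _ => ?_)
    have e : 2 - 2 * B i = ∑ y, (Real.sqrt (ν i y) - Real.sqrt (π i y)) ^ 2 := by
      have h : ∀ y : Ω i, (Real.sqrt (ν i y) - Real.sqrt (π i y)) ^ 2 =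
          ν i y + π i y - 2 * Real.sqrt (ν i y * π i y) := by
        intro y
        rw [sub_sq, Real.sq_sqrt (hν i y), Real.sq_sqrt (hπ i y).le,
          Real.sqrt_mul (hν i y)]
        ring
      simp_rw [h]
      rw [Finset.sum_sub_distrib, Finset.sum_add_distrib, hν1, hπ1, ← Finset.mul_sum]
      simp only [hB]
      ring
    rw [e]
    exact Finset.sum_le_sum fun y _ => sq_sqrt_sub_le (hν i y) (hπ i y)
  calc (1 / 2) * ∑ x : (∀ i, Ω i), |(∏ i, ν i (x i)) - ∏ i, π i (x i)|
      ≤ (1 / 2) * (Real.sqrt (2 - 2 * P) * 2) := by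
        apply mul_le_mul_of_nonneg_left key; norm_num
    _ = Real.sqrt (2 - 2 * P) := by ring
    _ ≤ Real.sqrt (∑ i, ∑ y, (ν i y - π i y) ^ 2 / π i y) := Real.sqrt_le_sqrt hfinal
end

section
/- Let q ≥ 3 be an integer, and for v = (1,…,1,2) ∈ ℤ^d with d ≥ 2, define λ_{kv} = ((d−1)/d)·cos(2πk/q) + (1/d)·cos(4πk/q) for k = 1,…,q−1, and λ* = max_k λ_{kv}. If q ≥ 5, or (q = 4 and d ≥ 3), then λ* < cos(2π/q). -/
open Finset Real

/-- The 'knight' pattern spectrum beats the 'rainbow' one: for `v = (1,…,1,2) ∈ ℤ^d`,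
`λ_{kv} = ((d−1)/d)cos(2πk/q) + (1/d)cos(4πk/q)`, if `q ≥ 5`, or `q = 4` and `d ≥ 3`,
then `max_{1 ≤ k ≤ q−1} λ_{kv} < cos(2π/q)`. -/
theorem stmt_17 (q d : ℕ) (hq : 3 ≤ q) (hd : 2 ≤ d)
    (lam : ℕ → ℝ)
    (hlam : ∀ k, lam k = ((d : ℝ) - 1) / d * Real.cos (2 * π * k / q)
      + (1 / d : ℝ) * Real.cos (4 * π * k / q))
    (hcase : 5 ≤ q ∨ (q = 4 ∧ 3 ≤ d)) :
    (Finset.Icc 1 (q - 1)).sup' (Finset.nonempty_Icc.mpr (by omega)) lam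
      < Real.cos (2 * π / q) := by
  have hπ := Real.pi_pos
  have hq4 : 4 ≤ q := by rcases hcase with h | ⟨h, _⟩ <;> omega
  have hqR : (4 : ℝ) ≤ q := by exact_mod_cast hq4
  have hq0 : (0 : ℝ) < q := by linarith
  set c1 := Real.cos (2 * π / q) with hc1
  have harg0 : 0 < 2 * π / q := by positivity
  have hargpi2 : 2 * π / q ≤ π / 2 := by
    rw [div_le_iff₀ hq0]; nlinarith
  have hc1nn : 0 ≤ c1 := Real.cos_nonneg_of_mem_Icc ⟨by linarith, hargpi2⟩
  clear_value c1
  have hc1lt1 : c1 < 1 := by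
    rw [hc1]
    have := Real.cos_lt_cos_of_nonneg_of_le_pi (le_refl 0) (by linarith : 2 * π / ↑q ≤ π) harg0
    simpa using this
  have hdR : (2 : ℝ) ≤ d := by exact_mod_cast hd
  have hd0 : (0 : ℝ) < d := by linarith
  have hd5 : 2 - (d : ℝ) < d * c1 := by
    rcases hcase with h5 | ⟨h4, hd3⟩
    · have hq5R : (5 : ℝ) ≤ q := by exact_mod_cast h5
      have hlt : 2 * π / q < π / 2 := by
        rw [div_lt_iff₀ hq0]; nlinarith
      have hc1pos : 0 < c1 := by
        rw [hc1]; exact Real.cos_pos_of_mem_Ioo ⟨by linarith, hlt⟩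
      nlinarith
    · have hd3R : (3 : ℝ) ≤ d := by exact_mod_cast hd3
      nlinarith
  rw [Finset.sup'_lt_iff]
  intro k hk
  rw [Finset.mem_Icc] at hk
  obtain ⟨hk1, hk2⟩ := hk
  have hk1R : (1 : ℝ) ≤ k := by exact_mod_cast hk1
  have hk2R : (k : ℝ) ≤ q - 1 := by
    have : k + 1 ≤ q := by omega
    have := (Nat.cast_le (α := ℝ)).mpr this
    push_cast at this; linarith
  set c := Real.cos (2 * π * k / q) with hc
  -- bound: c ≤ c1
  have hθ1 : 2 * π / q ≤ 2 * π * k / q := by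
    rw [div_le_div_iff₀ hq0 hq0]
    nlinarith [mul_nonneg (mul_nonneg (by linarith : (0:ℝ) ≤ 2 * π) (le_of_lt hq0))
      (by linarith : (0:ℝ) ≤ (k:ℝ) - 1)]
  have hθ2 : 2 * π * k / q ≤ 2 * π - 2 * π / q := by
    rw [div_le_iff₀ hq0, sub_mul, div_mul_cancel₀ _ (ne_of_gt hq0)]
    nlinarith [mul_le_mul_of_nonneg_left hk2R (by linarith : (0:ℝ) ≤ 2 * π)]
  have hcle : c ≤ c1 := by
    rw [hc, hc1]
    rcases le_or_gt (2 * π * k / q) π with hle | hgt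
    · exact Real.cos_le_cos_of_nonneg_of_le_pi (le_of_lt harg0) hle hθ1
    · rw [← Real.cos_two_pi_sub (2 * π * k / q)]
      apply Real.cos_le_cos_of_nonneg_of_le_pi (le_of_lt harg0) (by linarith) (by linarith)
  have hcge : -1 ≤ c := Real.neg_one_le_cos _
  -- double angle
  have hdbl : Real.cos (4 * π * k / q) = 2 * c ^ 2 - 1 := by
    have : 4 * π * (k : ℝ) / q = 2 * (2 * π * k / q) := by ring
    rw [this, Real.cos_two_mul]
  rw [hlam k, hdbl, ← hc]
  have key : ((d : ℝ) - 1) / d * c + (1 / d : ℝ) * (2 * c ^ 2 - 1)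
      = (((d : ℝ) - 1) * c + (2 * c ^ 2 - 1)) / d := by
    field_simp
  clear_value c
  rw [key, div_lt_iff₀ hd0]
  clear key hdbl hθ1 hθ2 hc hc1 hlam hargpi2 harg0 hcase hk1 hk2 hq hd hq4
  rcases le_or_gt 0 ((d : ℝ) - 3 + 2 * c1) with hpos | hneg
  · nlinarith [mul_nonneg (by linarith : (0:ℝ) ≤ c + 1) (by linarith : (0:ℝ) ≤ c1 - c),
      mul_nonneg (by linarith : (0:ℝ) ≤ c1 - c) hpos,
      mul_pos (by linarith : (0:ℝ) < 2 * c1 + 1) (by linarith : (0:ℝ) < 1 - c1)]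
  · nlinarith [mul_nonneg (by linarith : (0:ℝ) ≤ c + 1) (by linarith : (0:ℝ) ≤ c1 - c),
      mul_nonpos_of_nonneg_of_nonpos (by linarith : (0:ℝ) ≤ c + 1) (le_of_lt hneg)]
end
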